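/- arXiv:2011.07856 — 2 statements merged into one kernel-verified Lean document; each statement's English description precedes it below -/
import Mathlib

section
/- Let β be a positive even integer, N a positive integer, and α a real number with 2α not an integer. Then (-1)^{βN(N-1)/4} (2π)^N M_N(α, α, β/2) = (-tan(πα))^N S_N(-β(N-1)/2 - 1 - α, -β(N-1)/2 - 1 - α, β/2), where all Gamma factors occurring are understood as values of the complex Gamma function (no argument is a nonpositive integer under the stated hypotheses). -/
open Real Complex Finset

/-- `M_N(a,b,λ)` from the paper, with complex Gamma functions. -/
noncomputable def MN (N : ℕ) (a b lam : ℂ) : ℂ :=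
  ∏ j ∈ Finset.range N,
    Complex.Gamma (lam*j + a + b + 1) * Complex.Gamma (lam*(j+1) + 1) /
      (Complex.Gamma (lam*j + a + 1) * Complex.Gamma (lam*j + b + 1) *
        Complex.Gamma (1 + lam))

/-- `S_N(a,b,λ)` from the paper, with complex Gamma functions. -/
noncomputable def SN (N : ℕ) (a b lam : ℂ) : ℂ :=
  ∏ j ∈ Finset.range N,
    Complex.Gamma (a + 1 + lam*j) * Complex.Gamma (b + 1 + lam*j) *
      Complex.Gamma (1 + lam*(j+1)) /
      (Complex.Gamma (a + b + 2 + lam*((N:ℂ) + j - 1)) * Complex.Gamma (1 + lam))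

private lemma csinshift (x : ℂ) (n : ℕ) :
    Complex.sin (x + n * π) = (-1) ^ n * Complex.sin x := by
  induction n with
  | zero => simp
  | succ n ih =>
    have : x + (↑(n+1)) * (π:ℂ) = (x + n * π) + π := by push_cast; ring
    rw [this, Complex.sin_add_pi, ih, pow_succ]; ring

private lemma core (α : ℝ) (hα : ∀ m : ℤ, 2*α ≠ (m : ℝ)) (n : ℕ) :
    (-1:ℂ)^n * (2*(π:ℂ)) *
      (Complex.Gamma (↑n + 2*(α:ℂ) + 1) /
        (Complex.Gamma (↑n + (α:ℂ) + 1) * Complex.Gamma (↑n + (α:ℂ) + 1))) =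
    (-Complex.tan ((π:ℂ)*(α:ℂ))) *
      (Complex.Gamma (-↑n - (α:ℂ)) * Complex.Gamma (-↑n - (α:ℂ)) /
        Complex.Gamma (-↑n - 2*(α:ℂ))) := by
  have hπ : (π:ℂ) ≠ 0 := by exact_mod_cast Real.pi_ne_zero
  have hs : Complex.sin ((π:ℂ)*(α:ℂ)) ≠ 0 := by
    intro h
    rw [Complex.sin_eq_zero_iff] at h
    obtain ⟨k, hk⟩ := h
    have h2 : (π:ℂ) * (α:ℂ) = (π:ℂ) * (k:ℂ) := by rw [hk]; ring
    have h3 : ((α:ℝ):ℂ) = ((k:ℝ):ℂ) := by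
      have := mul_left_cancel₀ hπ h2; exact_mod_cast this
    exact hα (2*k) (by have := Complex.ofReal_injective h3; rw [this]; push_cast; ring)
  have hc : Complex.cos ((π:ℂ)*(α:ℂ)) ≠ 0 := by
    intro h
    rw [Complex.cos_eq_zero_iff] at h
    obtain ⟨k, hk⟩ := h
    have h2 : (π:ℂ) * ((2*α:ℝ):ℂ) = (π:ℂ) * ((2*k+1 : ℤ):ℂ) := by
      push_cast; linear_combination 2 * hk
    have h3 : ((2*α:ℝ):ℂ) = (((2*k+1:ℤ)):ℂ) := mul_left_cancel₀ hπ h2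
    exact hα (2*k+1) (Complex.ofReal_injective (by exact_mod_cast h3))
  have hs2 : Complex.sin ((π:ℂ)*(2*(α:ℂ))) ≠ 0 := by
    intro h
    rw [Complex.sin_eq_zero_iff] at h
    obtain ⟨k, hk⟩ := h
    have h2 : (π:ℂ) * ((2*α:ℝ):ℂ) = (π:ℂ) * ((k:ℤ):ℂ) := by
      push_cast; linear_combination hk
    have h3 : ((2*α:ℝ):ℂ) = ((k:ℤ):ℂ) := mul_left_cancel₀ hπ h2
    exact hα k (Complex.ofReal_injective (by exact_mod_cast h3))
  have hB : Complex.Gamma (↑n + (α:ℂ) + 1) ≠ 0 := by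
    apply Complex.Gamma_ne_zero
    intro m h
    have hre : α = -(m:ℝ) - n - 1 := by
      have := congrArg Complex.re h
      simp at this; linarith
    exact hα (-2*(m:ℤ) - 2*n - 2) (by rw [hre]; push_cast; ring)
  have hA : Complex.Gamma (↑n + 2*(α:ℂ) + 1) ≠ 0 := by
    apply Complex.Gamma_ne_zero
    intro m h
    have hre : 2*α = -(m:ℝ) - n - 1 := by
      have := congrArg Complex.re h
      simp at this; linarith
    exact hα (-(m:ℤ) - n - 1) (by rw [hre]; push_cast; ring)
  have hRX := Complex.Gamma_mul_Gamma_one_sub (↑n + (α:ℂ) + 1)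
  have e1 : (1:ℂ) - (↑n + (α:ℂ) + 1) = -↑n - α := by ring
  have e2 : (π:ℂ) * (↑n + (α:ℂ) + 1) = (π:ℂ)*(α:ℂ) + (↑(n+1) : ℂ) * π := by push_cast; ring
  rw [e1, e2, csinshift] at hRX
  have hRY := Complex.Gamma_mul_Gamma_one_sub (↑n + 2*(α:ℂ) + 1)
  have e3 : (1:ℂ) - (↑n + 2*(α:ℂ) + 1) = -↑n - 2*α := by ring
  have e4 : (π:ℂ) * (↑n + 2*(α:ℂ) + 1) = (π:ℂ)*(2*(α:ℂ)) + (↑(n+1) : ℂ) * π := by push_cast; ring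
  rw [e3, e4, csinshift] at hRY
  have hD2 : ((-1:ℂ))^(n+1) * Complex.sin ((π:ℂ)*(2*(α:ℂ))) ≠ 0 :=
    mul_ne_zero (pow_ne_zero _ (by norm_num)) hs2
  have hY : Complex.Gamma (-↑n - 2*(α:ℂ)) ≠ 0 := by
    intro h
    rw [h, mul_zero, eq_comm, div_eq_zero_iff] at hRY
    rcases hRY with h' | h'
    · exact hπ h'
    · exact hD2 h'
  have hs2v : Complex.sin ((π:ℂ)*(2*(α:ℂ))) =
      2 * Complex.sin ((π:ℂ)*(α:ℂ)) * Complex.cos ((π:ℂ)*(α:ℂ)) := by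
    rw [show (π:ℂ)*(2*(α:ℂ)) = 2*((π:ℂ)*(α:ℂ)) by ring, Complex.sin_two_mul]
  have key2 : (-1:ℂ)^n * (2*(π:ℂ)) *
      (Complex.Gamma (↑n + 2*(α:ℂ) + 1) * Complex.Gamma (-↑n - 2*(α:ℂ))) *
      Complex.cos ((π:ℂ)*(α:ℂ)) =
      (-Complex.sin ((π:ℂ)*(α:ℂ))) *
      (Complex.Gamma (↑n + (α:ℂ) + 1) * Complex.Gamma (-↑n - (α:ℂ)))^2 := by
    rw [hRX, hRY, hs2v]
    rcases Nat.even_or_odd n with hn | hn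
    · rw [Even.neg_one_pow hn, Odd.neg_one_pow (Even.add_one hn)]
      field_simp
    · rw [Odd.neg_one_pow hn, Even.neg_one_pow (Odd.add_one hn)]
      field_simp
  rw [Complex.tan_eq_sin_div_cos]
  field_simp
  linear_combination key2

theorem statement3 (β N : ℕ) (hβ : 0 < β) (hβe : Even β) (hN : 0 < N) (α : ℝ)
    (hα : ∀ m : ℤ, 2*α ≠ (m : ℝ)) :
    (-1:ℂ)^(β*N*(N-1)/4) * (2*(π:ℂ))^N * MN N (α:ℂ) (α:ℂ) ((β:ℂ)/2) =
      (-Complex.tan (π*α))^N *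
        SN N (-(β:ℂ)*((N:ℂ)-1)/2 - 1 - (α:ℂ)) (-(β:ℂ)*((N:ℂ)-1)/2 - 1 - (α:ℂ))
          ((β:ℂ)/2) := by
  obtain ⟨l, hl⟩ := hβe
  have hl0 : 0 < l := by omega
  have hβc : (β:ℂ) = 2*(l:ℂ) := by rw [hl]; push_cast; ring
  have hlam : ((β:ℂ))/2 = (l:ℂ) := by rw [hβc]; ring
  set h : ℕ → ℂ := fun n =>
    Complex.Gamma (↑n + 2*(α:ℂ) + 1) /
      (Complex.Gamma (↑n + (α:ℂ) + 1) * Complex.Gamma (↑n + (α:ℂ) + 1)) with hh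
  set k : ℕ → ℂ := fun n =>
    Complex.Gamma (-↑n - (α:ℂ)) * Complex.Gamma (-↑n - (α:ℂ)) /
      Complex.Gamma (-↑n - 2*(α:ℂ)) with hk
  set P : ℂ := ∏ j ∈ Finset.range N,
    (Complex.Gamma (1 + (l:ℂ)*(↑j+1)) / Complex.Gamma (1 + (l:ℂ))) with hP
  have stepA : MN N (α:ℂ) (α:ℂ) ((β:ℂ)/2)
      = (∏ j ∈ Finset.range N, h (l*j)) * P := by
    rw [hlam, MN, hP, ← Finset.prod_mul_distrib]
    refine Finset.prod_congr rfl (fun j hj => ?_)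
    rw [hh]
    simp only
    rw [show (l:ℂ)*↑j + (α:ℂ) + (α:ℂ) + 1 = ↑(l*j) + 2*(α:ℂ) + 1 by push_cast; ring,
        show (l:ℂ)*↑j + (α:ℂ) + 1 = ↑(l*j) + (α:ℂ) + 1 by push_cast; ring,
        show (l:ℂ)*(↑j+1) + 1 = 1 + (l:ℂ)*(↑j+1) by ring]
    ring
  have stepB : SN N (-(β:ℂ)*((N:ℂ)-1)/2 - 1 - (α:ℂ)) (-(β:ℂ)*((N:ℂ)-1)/2 - 1 - (α:ℂ)) ((β:ℂ)/2)
      = (∏ j ∈ Finset.range N, k (l*(N-1-j))) * P := by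
    rw [hlam, SN, hP, ← Finset.prod_mul_distrib]
    refine Finset.prod_congr rfl (fun j hj => ?_)
    rw [hk]
    simp only
    have hj' : j < N := Finset.mem_range.mp hj
    have hNj : ((N - 1 - j : ℕ) : ℂ) = (N:ℂ) - 1 - (j:ℂ) := by
      have h1 : ((N - 1 - j : ℕ) : ℝ) = (N:ℝ) - 1 - (j:ℝ) := by
        rw [Nat.cast_sub (by omega), Nat.cast_sub (by omega)]
        push_cast
        ring
      calc ((N - 1 - j : ℕ) : ℂ) = (((N - 1 - j : ℕ) : ℝ) : ℂ) := by push_cast; ring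
        _ = (N:ℂ) - 1 - (j:ℂ) := by rw [h1]; push_cast; ring
    rw [show -(β:ℂ)*((N:ℂ)-1)/2 - 1 - (α:ℂ) + 1 + (l:ℂ)*↑j
          = -↑(l*(N-1-j)) - (α:ℂ) by push_cast [hNj]; rw [hβc]; ring,
        show (-(β:ℂ)*((N:ℂ)-1)/2 - 1 - (α:ℂ)) + (-(β:ℂ)*((N:ℂ)-1)/2 - 1 - (α:ℂ)) + 2
              + (l:ℂ)*((N:ℂ) + ↑j - 1)
          = -↑(l*(N-1-j)) - 2*(α:ℂ) by push_cast [hNj]; rw [hβc]; ring]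
    ring
  have stepC : ∏ j ∈ Finset.range N, k (l*(N-1-j)) = ∏ j ∈ Finset.range N, k (l*j) :=
    Finset.prod_range_reflect (fun j => k (l*j)) N
  have hD : ∏ j ∈ Finset.range N, ((-1:ℂ)^(l*j) * (2*(π:ℂ)) * h (l*j))
      = ∏ j ∈ Finset.range N, ((-Complex.tan ((π:ℂ)*(α:ℂ))) * k (l*j)) :=
    Finset.prod_congr rfl (fun j _ => core α hα (l*j))
  -- exponent arithmetic
  obtain ⟨m, hm⟩ := Nat.even_mul_succ_self (N-1)
  have hm2 : (N-1)*N = m + m := by rwa [Nat.sub_add_cancel hN] at hm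
  have hm' : N*(N-1) = 2*m := by rw [Nat.mul_comm, hm2]; ring
  have hexp : β*N*(N-1)/4 = l * (N*(N-1)/2) := by
    have h4 : β*N*(N-1) = 4*(l*m) := by rw [hl, mul_assoc, hm']; ring
    rw [h4, Nat.mul_div_cancel_left _ (by norm_num : 0 < 4), hm',
        Nat.mul_div_cancel_left _ (by norm_num : 0 < 2)]
  have hsum : ∑ j ∈ Finset.range N, l*j = l * (N*(N-1)/2) := by
    rw [← Finset.mul_sum, Finset.sum_range_id]
  have stepE : ∏ j ∈ Finset.range N, ((-1:ℂ)^(l*j) * (2*(π:ℂ)) * h (l*j))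
      = (-1:ℂ)^(β*N*(N-1)/4) * (2*(π:ℂ))^N * ∏ j ∈ Finset.range N, h (l*j) := by
    rw [Finset.prod_mul_distrib, Finset.prod_mul_distrib,
        Finset.prod_pow_eq_pow_sum, Finset.prod_const, Finset.card_range, hsum, hexp]
  have stepF : ∏ j ∈ Finset.range N, ((-Complex.tan ((π:ℂ)*(α:ℂ))) * k (l*j))
      = (-Complex.tan ((π:ℂ)*(α:ℂ)))^N * ∏ j ∈ Finset.range N, k (l*j) := by
    rw [Finset.prod_mul_distrib, Finset.prod_const, Finset.card_range]
  have main : (-1:ℂ)^(β*N*(N-1)/4) * (2*(π:ℂ))^N * ∏ j ∈ Finset.range N, h (l*j)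
      = (-Complex.tan ((π:ℂ)*(α:ℂ)))^N * ∏ j ∈ Finset.range N, k (l*j) := by
    rw [← stepE, ← stepF, hD]
  rw [stepA, stepB, stepC]
  linear_combination P * main
end

section
/- Let β be a positive even integer, N a positive integer, and α a complex number with Im(α) ≠ 0 and 2·Re(α) not an integer, and let ᾱ denote the complex conjugate of α. Then (-1)^{βN(N-1)/4} π^N M_N(α, ᾱ, β/2) = (- sin(πα) sin(πᾱ) / sin(π(α+ᾱ)))^N · S_N(-β(N-1)/2 - 1 - α, -β(N-1)/2 - 1 - ᾱ, β/2). -/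
/-!
With `λ = β/2 = m` an integer, reversing the order of the product in `S_N` turns its Gamma
arguments into `-mj - α`, `-mj - ᾱ` and `-mj - (α + ᾱ)`. The reflection formula
`Γ(-n - s) Γ(n + s + 1) = -(-1)ⁿ π / sin(π s)` turns each such factor into the matching factor
of `M_N`, up to `(-1)^(mj) π` and the sine ratio; the signs multiply to `(-1)^(m N (N-1)/2)`,
and the factors `Γ(1 + λ(j+1)) / Γ(1 + λ)` are common to both sides.
-/

open Real Complex Finset

namespace Complex

theorem sin_pi_mul_ne_zero {z : ℂ} (hz : ∀ k : ℤ, z ≠ k) : sin (π * z) ≠ 0 :=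
  sin_ne_zero_iff.mpr fun k h => hz k (mul_left_cancel₀ (ofReal_ne_zero.mpr pi_ne_zero)
    (h.trans (mul_comm _ _)))

theorem sin_pi_mul_neg_nat_sub (n : ℕ) (s : ℂ) :
    sin (π * (-n - s)) = -((-1) ^ n * sin (π * s)) := by
  rw [show (π : ℂ) * (-n - s) = -(π * s + n * π) by ring, sin_neg,
    sin_antiperiodic.add_nat_mul_eq]

theorem Gamma_neg_nat_sub_mul_Gamma_nat_add_add_one (n : ℕ) (s : ℂ) :
    Gamma (-n - s) * Gamma (n + s + 1) = -((-1) ^ n * π / sin (π * s)) := by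
  have h := Gamma_mul_Gamma_one_sub (-n - s)
  rw [show 1 - (-n - s : ℂ) = n + s + 1 by ring, sin_pi_mul_neg_nat_sub] at h
  rw [h, div_neg, neg_inj, ← div_div, div_eq_mul_inv (π : ℂ), ← inv_pow, inv_neg_one,
    mul_comm]

theorem Gamma_nat_add_add_one_ne_zero (n : ℕ) {s : ℂ} (hs : sin (π * s) ≠ 0) :
    Gamma (n + s + 1) ≠ 0 := by
  refine right_ne_zero_of_mul (a := Gamma (-n - s)) ?_
  rw [Gamma_neg_nat_sub_mul_Gamma_nat_add_add_one]
  exact neg_ne_zero.mpr (div_ne_zero (mul_ne_zero (pow_ne_zero n (by norm_num))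
    (ofReal_ne_zero.mpr pi_ne_zero)) hs)

theorem Gamma_neg_nat_sub (n : ℕ) {s : ℂ} (hs : sin (π * s) ≠ 0) :
    Gamma (-n - s) = -((-1) ^ n * π / (sin (π * s) * Gamma (n + s + 1))) := by
  rw [← div_div, ← neg_div, ← Gamma_neg_nat_sub_mul_Gamma_nat_add_add_one,
    mul_div_cancel_right₀ _ (Gamma_nat_add_add_one_ne_zero n hs)]

theorem neg_one_pow_mul_pi_mul_Gamma_ratio (n : ℕ) {a b : ℂ} (ha : sin (π * a) ≠ 0)
    (hb : sin (π * b) ≠ 0) (hab : sin (π * (a + b)) ≠ 0) :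
    (-1) ^ n * π * (Gamma (n + a + b + 1) / (Gamma (n + a + 1) * Gamma (n + b + 1))) =
      -(sin (π * a) * sin (π * b) / sin (π * (a + b))) *
        (Gamma (-n - a) * Gamma (-n - b) / Gamma (-n - (a + b))) := by
  have hGa := Gamma_nat_add_add_one_ne_zero n ha
  have hGb := Gamma_nat_add_add_one_ne_zero n hb
  have hGab := Gamma_nat_add_add_one_ne_zero n hab
  rw [Gamma_neg_nat_sub n ha, Gamma_neg_nat_sub n hb, Gamma_neg_nat_sub n hab]
  rw [← add_assoc] at hGab ⊢
  field_simp

end Complex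

theorem prod_range_neg_one_pow_mul {R : Type*} [CommMonoid R] [HasDistribNeg R] (m N : ℕ)
    (x : R) :
    ∏ j ∈ range N, ((-1) ^ (m * j) * x) = (-1) ^ ((m + m) * N * (N - 1) / 4) * x ^ N := by
  have hexp : (m + m) * N * (N - 1) / 4 = ∑ j ∈ range N, m * j := by
    rw [← mul_sum, mul_assoc, ← sum_range_id_mul_two, ← two_mul,
      show 2 * m * ((∑ i ∈ range N, i) * 2) = m * (∑ i ∈ range N, i) * 4 by ring]
    exact Nat.mul_div_cancel _ four_pos
  rw [prod_mul_distrib, prod_pow_eq_pow_sum, prod_const, card_range, hexp]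

noncomputable def gammaRatioProd (N : ℕ) (lam : ℂ) : ℂ :=
  ∏ j ∈ range N, Gamma (1 + lam * (j + 1)) / Gamma (1 + lam)

theorem MN_eq_mul (N : ℕ) (a b lam : ℂ) :
    MN N a b lam = (∏ j ∈ range N, Gamma (lam * j + a + b + 1) /
      (Gamma (lam * j + a + 1) * Gamma (lam * j + b + 1))) * gammaRatioProd N lam := by
  rw [MN, gammaRatioProd, ← prod_mul_distrib]
  refine prod_congr rfl fun j _ => ?_
  rw [add_comm 1 (lam * (j + 1))]
  ring

theorem SN_eq_mul (N : ℕ) (a b lam : ℂ) :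
    SN N a b lam = (∏ j ∈ range N, Gamma (a + 1 + lam * j) * Gamma (b + 1 + lam * j) /
      Gamma (a + b + 2 + lam * (N + j - 1))) * gammaRatioProd N lam := by
  rw [SN, gammaRatioProd, ← prod_mul_distrib]
  exact prod_congr rfl fun j _ => by ring

theorem prod_Gamma_shift_eq_prod_Gamma_neg (N m : ℕ) (a b : ℂ) :
    ∏ j ∈ range N, Gamma ((-(m * (N - 1)) - 1 - a) + 1 + m * j) *
        Gamma ((-(m * (N - 1)) - 1 - b) + 1 + m * j) /
        Gamma ((-(m * (N - 1)) - 1 - a) + (-(m * (N - 1)) - 1 - b) + 2 + m * (N + j - 1)) =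
      ∏ j ∈ range N, Gamma (-(m * j : ℕ) - a) * Gamma (-(m * j : ℕ) - b) /
        Gamma (-(m * j : ℕ) - (a + b)) := by
  rw [← prod_range_reflect]
  refine prod_congr rfl fun j hj => ?_
  have hcast : ((N - 1 - j : ℕ) : ℂ) = N - 1 - j := by
    rw [Nat.sub_sub, Nat.cast_sub (by simpa [add_comm] using mem_range.mp hj)]
    push_cast
    ring
  rw [hcast]
  push_cast
  ring_nf

theorem statement4_general (β N : ℕ) (hβe : Even β) (α : ℂ)
    (hIm : α.im ≠ 0) (hRe : ∀ m : ℤ, 2*α.re ≠ (m : ℝ)) :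
    (-1:ℂ)^(β*N*(N-1)/4) * (π:ℂ)^N * MN N α (starRingEnd ℂ α) ((β:ℂ)/2) =
      (-(Complex.sin (π*α) * Complex.sin (π*(starRingEnd ℂ α)) /
          Complex.sin (π*(α + starRingEnd ℂ α))))^N *
        SN N (-(β:ℂ)*((N:ℂ)-1)/2 - 1 - α)
          (-(β:ℂ)*((N:ℂ)-1)/2 - 1 - starRingEnd ℂ α) ((β:ℂ)/2) := by
  obtain ⟨m, rfl⟩ := hβe
  have hsα : sin (π * α) ≠ 0 := sin_pi_mul_ne_zero fun k h => hIm (by simp [h])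
  have hsα' : sin (π * starRingEnd ℂ α) ≠ 0 := sin_pi_mul_ne_zero fun k h => hIm (by
    simpa using congrArg im h)
  have hsαα' : sin (π * (α + starRingEnd ℂ α)) ≠ 0 :=
    sin_pi_mul_ne_zero fun k h => hRe k (by rw [add_conj] at h; exact_mod_cast congrArg re h)
  have hlam : ((m + m : ℕ) : ℂ) / 2 = m := by push_cast; ring
  have hshift (z : ℂ) :
      -((m + m : ℕ) : ℂ) * (N - 1) / 2 - 1 - z = -(m * (N - 1)) - 1 - z := by
    push_cast; ring
  rw [hlam, hshift, hshift, MN_eq_mul, SN_eq_mul, prod_Gamma_shift_eq_prod_Gamma_neg,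
    ← prod_range_neg_one_pow_mul, pow_eq_prod_const, ← mul_assoc, ← mul_assoc,
    ← prod_mul_distrib, ← prod_mul_distrib]
  congr 1
  refine prod_congr rfl fun j _ => ?_
  simpa using neg_one_pow_mul_pi_mul_Gamma_ratio (m * j) hsα hsα' hsαα'

theorem statement4 (β N : ℕ) (hβ : 0 < β) (hβe : Even β) (hN : 0 < N) (α : ℂ)
    (hIm : α.im ≠ 0) (hRe : ∀ m : ℤ, 2*α.re ≠ (m : ℝ)) :
    (-1:ℂ)^(β*N*(N-1)/4) * (π:ℂ)^N * MN N α (starRingEnd ℂ α) ((β:ℂ)/2) =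
      (-(Complex.sin (π*α) * Complex.sin (π*(starRingEnd ℂ α)) /
          Complex.sin (π*(α + starRingEnd ℂ α))))^N *
        SN N (-(β:ℂ)*((N:ℂ)-1)/2 - 1 - α)
          (-(β:ℂ)*((N:ℂ)-1)/2 - 1 - starRingEnd ℂ α) ((β:ℂ)/2) :=
  statement4_general β N hβe α hIm hRe
end
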